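/- For a > 0 and c ∈ ℝ, with h(s,a) = (a/√(2πs³))·exp(−a²/(2s)), we have ∫₀^∞ h(s,a)·e^{−ca − c²s/2} ds = e^{−ca−|c|·a}. In particular, for c ≥ 0 it equals e^{−2ca}, the probability that Brownian motion ever hits the line a + ct. -/

import Mathlib

open Real MeasureTheory Filter Set Topology

noncomputable def h (s a : ℝ) : ℝ := a / Real.sqrt (2 * Real.pi * s ^ 3) * Real.exp (-a ^ 2 / (2 * s))

noncomputable def gpdf (x : ℝ) : ℝ := Real.exp (-x ^ 2 / 2) / Real.sqrt (2 * Real.pi)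

noncomputable def Phi (x : ℝ) : ℝ := ∫ t in Set.Iic x, gpdf t

lemma gpdf_nonneg (x : ℝ) : 0 ≤ gpdf x := by
  unfold gpdf; positivity

lemma gpdf_continuous : Continuous gpdf := by
  unfold gpdf; fun_prop

lemma integrable_gpdf : Integrable gpdf := by
  have h : Integrable (fun x : ℝ => Real.exp (-(1/2 : ℝ) * x ^ 2)) :=
    integrable_exp_neg_mul_sq (by norm_num)
  have := h.div_const (Real.sqrt (2 * Real.pi))
  refine this.congr (Eventually.of_forall fun x => ?_)
  unfold gpdf
  ring_nf

lemma integral_gpdf : ∫ x, gpdf x = 1 := by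
  unfold gpdf
  rw [integral_div]
  have h : ∫ x : ℝ, Real.exp (-x ^ 2 / 2) = Real.sqrt (2 * Real.pi) := by
    have h0 := integral_gaussian (1/2 : ℝ)
    rw [show ((π : ℝ) / (1/2)) = 2 * π by ring] at h0
    rw [← h0]
    simp_rw [show ∀ x : ℝ, -x ^ 2 / 2 = -(1/2) * x ^ 2 from fun x => by ring]
  rw [h, div_self (by positivity)]

lemma hasDerivAt_Phi (x : ℝ) : HasDerivAt Phi (gpdf x) x := by
  have heq : Phi = fun y => (∫ t in Set.Iic (0:ℝ), gpdf t) + ∫ t in (0:ℝ)..y, gpdf t := by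
    funext y
    rw [← intervalIntegral.integral_Iic_sub_Iic (integrable_gpdf.integrableOn)
      (integrable_gpdf.integrableOn)]
    unfold Phi; ring
  rw [heq]
  have : HasDerivAt (fun y => ∫ t in (0:ℝ)..y, gpdf t) (gpdf x) x :=
    intervalIntegral.integral_hasDerivAt_right
      (integrable_gpdf.intervalIntegrable)
      (gpdf_continuous.stronglyMeasurable.stronglyMeasurableAtFilter)
      (gpdf_continuous.continuousAt)
  simpa using (this.const_add (∫ t in Set.Iic (0:ℝ), gpdf t))

lemma Phi_tendsto_atTop : Tendsto Phi atTop (𝓝 1) := by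
  rw [← integral_gpdf]
  exact (aecover_Iic (tendsto_id (α := ℝ))).integral_tendsto_of_countably_generated
    integrable_gpdf

lemma Phi_tendsto_atBot : Tendsto Phi atBot (𝓝 0) := by
  have h1 : Tendsto (fun x : ℝ => ∫ t in Set.Ioi x, gpdf t) atBot (𝓝 1) := by
    rw [← integral_gpdf]
    exact (aecover_Ioi (tendsto_id (α := ℝ))).integral_tendsto_of_countably_generated
      integrable_gpdf
  have h2 : ∀ x : ℝ, Phi x = 1 - ∫ t in Set.Ioi x, gpdf t := by
    intro x
    have := intervalIntegral.integral_Iic_add_Ioi (b := x) (f := gpdf) (μ := volume)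
      integrable_gpdf.integrableOn integrable_gpdf.integrableOn
    rw [integral_gpdf] at this
    unfold Phi; linarith
  rw [show Phi = fun x => 1 - ∫ t in Set.Ioi x, gpdf t from funext h2]
  have := (tendsto_const_nhds (x := (1:ℝ)) (f := atBot)).sub h1
  simpa using this

lemma Phi_zero : Phi 0 = 1/2 := by
  have heven : ∀ x : ℝ, gpdf (-x) = gpdf x := fun x => by
    unfold gpdf; rw [neg_sq]
  have hsymm : ∫ t in Set.Iic (0:ℝ), gpdf t = ∫ t in Set.Ioi (0:ℝ), gpdf t := by
    calc ∫ t in Set.Iic (0:ℝ), gpdf t = ∫ t in Set.Iic (0:ℝ), gpdf (-t) := by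
          simp_rw [heven]
      _ = ∫ t in Set.Ioi (-(0:ℝ)), gpdf t := integral_comp_neg_Iic 0 gpdf
      _ = ∫ t in Set.Ioi (0:ℝ), gpdf t := by norm_num
  have hsplit := intervalIntegral.integral_Iic_add_Ioi (b := (0:ℝ)) (f := gpdf) (μ := volume)
    integrable_gpdf.integrableOn integrable_gpdf.integrableOn
  rw [integral_gpdf] at hsplit
  unfold Phi
  rw [hsymm] at hsplit ⊢
  linarith

lemma sqrt_tendsto_atTop : Tendsto Real.sqrt atTop atTop := by
  refine (tendsto_rpow_atTop (y := (1/2:ℝ)) (by norm_num)).congr' ?_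
  filter_upwards [eventually_ge_atTop (0:ℝ)] with x hx
  exact (Real.sqrt_eq_rpow x).symm

/-- The key integral: the inverse Gaussian density integrates to 1. -/
lemma key_integral (a b : ℝ) (ha : 0 < a) (hb : 0 ≤ b) :
    ∫ s in Set.Ioi (0:ℝ),
      a / Real.sqrt (2 * Real.pi * s ^ 3) * Real.exp (-(a - b * s) ^ 2 / (2 * s)) = 1 := by
  set g : ℝ → ℝ := fun s =>
    a / Real.sqrt (2 * Real.pi * s ^ 3) * Real.exp (-(a - b * s) ^ 2 / (2 * s)) with hg
  set u : ℝ → ℝ := fun s => b * Real.sqrt s - a / Real.sqrt s with hu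
  set v : ℝ → ℝ := fun s => -(b * Real.sqrt s) - a / Real.sqrt s with hv
  set G : ℝ → ℝ := fun s => if s ≤ 0 then 0 else
    Phi (u s) + Real.exp (2 * a * b) * Phi (v s) with hG
  -- auxiliary facts
  have hsqrt_pos : ∀ s : ℝ, 0 < s → 0 < Real.sqrt s := fun s hs => Real.sqrt_pos.mpr hs
  -- derivative of u and v
  have hder_u : ∀ s : ℝ, 0 < s →
      HasDerivAt u (b * (1 / (2 * Real.sqrt s)) + a * ((1 / (2 * Real.sqrt s)) / s)) s := by
    intro s hs
    have h1 : HasDerivAt Real.sqrt (1 / (2 * Real.sqrt s)) s := Real.hasDerivAt_sqrt hs.ne'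
    have h2 : HasDerivAt (fun t => b * Real.sqrt t) (b * (1 / (2 * Real.sqrt s))) s :=
      h1.const_mul b
    have h3 : HasDerivAt (fun t => a / Real.sqrt t)
        (-(a * ((1 / (2 * Real.sqrt s)) / Real.sqrt s ^ 2))) s := by
      have := (h1.inv (hsqrt_pos s hs).ne').const_mul a
      simpa [div_eq_mul_inv, mul_comm, mul_assoc, neg_div] using this
    have := h2.sub h3
    convert this using 1 <;> try rfl
    rw [Real.sq_sqrt hs.le]
    ring
  have hder_v : ∀ s : ℝ, 0 < s →
      HasDerivAt v (-(b * (1 / (2 * Real.sqrt s))) + a * ((1 / (2 * Real.sqrt s)) / s)) s := by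
    intro s hs
    have h1 : HasDerivAt Real.sqrt (1 / (2 * Real.sqrt s)) s := Real.hasDerivAt_sqrt hs.ne'
    have h2 : HasDerivAt (fun t => -(b * Real.sqrt t)) (-(b * (1 / (2 * Real.sqrt s)))) s :=
      (h1.const_mul b).neg
    have h3 : HasDerivAt (fun t => a / Real.sqrt t)
        (-(a * ((1 / (2 * Real.sqrt s)) / Real.sqrt s ^ 2))) s := by
      have := (h1.inv (hsqrt_pos s hs).ne').const_mul a
      simpa [div_eq_mul_inv, mul_comm, mul_assoc, neg_div] using this
    have := h2.sub h3
    convert this using 1 <;> try rfl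
    rw [Real.sq_sqrt hs.le]
    ring
  -- derivative of G on Ioi 0
  have hderiv : ∀ s ∈ Set.Ioi (0:ℝ), HasDerivAt G (g s) s := by
    intro s hs
    rw [Set.mem_Ioi] at hs
    have hGeq : G =ᶠ[𝓝 s] fun t => Phi (u t) + Real.exp (2 * a * b) * Phi (v t) := by
      filter_upwards [Ioi_mem_nhds hs] with t ht
      simp [hG, not_le.mpr (Set.mem_Ioi.mp ht)]
    have h1 : HasDerivAt (fun t => Phi (u t))
        (gpdf (u s) * (b * (1 / (2 * Real.sqrt s)) + a * ((1 / (2 * Real.sqrt s)) / s))) s :=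
      (hasDerivAt_Phi (u s)).comp s (hder_u s hs)
    have h2 : HasDerivAt (fun t => Real.exp (2 * a * b) * Phi (v t))
        (Real.exp (2 * a * b) *
          (gpdf (v s) * (-(b * (1 / (2 * Real.sqrt s))) + a * ((1 / (2 * Real.sqrt s)) / s)))) s :=
      ((hasDerivAt_Phi (v s)).comp s (hder_v s hs)).const_mul _
    have h3 := h1.add h2
    refine (HasDerivAt.congr_of_eventuallyEq ?_ hGeq)
    convert h3 using 1 <;> try rfl
    -- algebraic identity
    have hts : Real.sqrt s ^ 2 = s := Real.sq_sqrt hs.le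
    set t := Real.sqrt s with hts'
    have htpos : 0 < t := hsqrt_pos s hs
    have hexp1 : Real.exp (2 * a * b) * gpdf (v s) = gpdf (u s) := by
      unfold gpdf
      rw [← mul_div_assoc, ← Real.exp_add]
      congr 2
      have : v s = -(b * t) - a / t := rfl
      rw [this, show u s = b * t - a / t from rfl]
      field_simp
      ring
    have hgpdf_u : gpdf (u s) = Real.exp (-(a - b * s) ^ 2 / (2 * s)) / Real.sqrt (2 * Real.pi) := by
      unfold gpdf
      congr 2
      rw [show u s = b * t - a / t from rfl, ← hts]
      field_simp
      ring
    have hsqrt3 : Real.sqrt (2 * Real.pi * s ^ 3) = Real.sqrt (2 * Real.pi) * (s * t) := by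
      rw [show 2 * Real.pi * s ^ 3 = (Real.sqrt (2 * Real.pi) * (s * t)) ^ 2 by
        rw [mul_pow, mul_pow, Real.sq_sqrt (by positivity : (0:ℝ) ≤ 2 * Real.pi), hts]; ring]
      exact Real.sqrt_sq (by positivity)
    -- combine
    rw [hg]
    simp only
    rw [hsqrt3, show ∀ D : ℝ, Real.exp (2 * a * b) * (gpdf (v s) * D) = gpdf (u s) * D from
      fun D => by rw [← mul_assoc, hexp1], ← mul_add, hgpdf_u]
    have hπ : 0 < Real.sqrt (2 * Real.pi) := Real.sqrt_pos.mpr (by positivity)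
    field_simp
    ring
  -- nonnegativity
  have hpos : ∀ s ∈ Set.Ioi (0:ℝ), 0 ≤ g s := by
    intro s hs
    rw [Set.mem_Ioi] at hs
    rw [hg]
    positivity
  -- continuity at 0 within Ici 0
  have htendsto_u0 : Tendsto u (𝓝[>] (0:ℝ)) atBot := by
    have hsq : Tendsto (fun s : ℝ => Real.sqrt s) (𝓝[>] 0) (𝓝[>] 0) := by
      rw [tendsto_nhdsWithin_iff]
      constructor
      · simpa using (Real.continuous_sqrt.tendsto 0).mono_left nhdsWithin_le_nhds
      · filter_upwards [self_mem_nhdsWithin] with x hx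
        exact hsqrt_pos x hx
    have hinv : Tendsto (fun s : ℝ => a / Real.sqrt s) (𝓝[>] 0) atTop := by
      have := tendsto_inv_nhdsGT_zero.comp hsq
      have h2 := this.const_mul_atTop ha
      refine h2.congr fun s => ?_
      simp [div_eq_mul_inv, Function.comp]
    have hb0 : Tendsto (fun s : ℝ => b * Real.sqrt s) (𝓝[>] 0) (𝓝 0) := by
      have : Tendsto (fun s : ℝ => Real.sqrt s) (𝓝[>] 0) (𝓝 0) :=
        hsq.mono_right nhdsWithin_le_nhds
      simpa using this.const_mul b
    exact hb0.add_atBot (tendsto_neg_atTop_atBot.comp hinv) |>.congr fun s => by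
      simp [hu, sub_eq_add_neg, Function.comp]
  have htendsto_v0 : Tendsto v (𝓝[>] (0:ℝ)) atBot := by
    have hsq : Tendsto (fun s : ℝ => Real.sqrt s) (𝓝[>] 0) (𝓝[>] 0) := by
      rw [tendsto_nhdsWithin_iff]
      constructor
      · simpa using (Real.continuous_sqrt.tendsto 0).mono_left nhdsWithin_le_nhds
      · filter_upwards [self_mem_nhdsWithin] with x hx
        exact hsqrt_pos x hx
    have hinv : Tendsto (fun s : ℝ => a / Real.sqrt s) (𝓝[>] 0) atTop := by
      have := tendsto_inv_nhdsGT_zero.comp hsq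
      have h2 := this.const_mul_atTop ha
      refine h2.congr fun s => ?_
      simp [div_eq_mul_inv, Function.comp]
    have hb0 : Tendsto (fun s : ℝ => -(b * Real.sqrt s)) (𝓝[>] 0) (𝓝 0) := by
      have : Tendsto (fun s : ℝ => Real.sqrt s) (𝓝[>] 0) (𝓝 0) :=
        hsq.mono_right nhdsWithin_le_nhds
      simpa using (this.const_mul b).neg
    exact hb0.add_atBot (tendsto_neg_atTop_atBot.comp hinv) |>.congr fun s => by
      simp [hv, sub_eq_add_neg, Function.comp]
  have hcont : ContinuousWithinAt G (Set.Ici (0:ℝ)) 0 := by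
    have hG0 : G 0 = 0 := by simp [hG]
    rw [ContinuousWithinAt, hG0]
    have hIci : Set.Ici (0:ℝ) = {0} ∪ Set.Ioi 0 := by
      ext x; simp [le_iff_lt_or_eq, eq_comm, or_comm]
    rw [hIci, nhdsWithin_union]
    rw [tendsto_sup]
    constructor
    · simp only [nhdsWithin_singleton]
      rw [tendsto_pure_left]
      intro U hU
      simpa [hG0] using mem_of_mem_nhds hU
    · have h1 : Tendsto (fun s => Phi (u s)) (𝓝[>] (0:ℝ)) (𝓝 0) :=
        Phi_tendsto_atBot.comp htendsto_u0
      have h2 : Tendsto (fun s => Real.exp (2 * a * b) * Phi (v s)) (𝓝[>] (0:ℝ)) (𝓝 0) := by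
        simpa using (Phi_tendsto_atBot.comp htendsto_v0).const_mul (Real.exp (2 * a * b))
      have := h1.add h2
      rw [add_zero] at this
      refine this.congr' ?_
      filter_upwards [self_mem_nhdsWithin] with s hs
      simp [hG, not_le.mpr (Set.mem_Ioi.mp hs)]
  -- limit at infinity
  have htop : Tendsto G atTop (𝓝 1) := by
    have hGev : G =ᶠ[atTop] fun s => Phi (u s) + Real.exp (2 * a * b) * Phi (v s) := by
      filter_upwards [eventually_gt_atTop (0:ℝ)] with s hs
      simp [hG, not_le.mpr hs]
    rw [tendsto_congr' hGev]
    have hainv : Tendsto (fun s : ℝ => a / Real.sqrt s) atTop (𝓝 0) := by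
      have := (sqrt_tendsto_atTop).inv_tendsto_atTop
      simpa [div_eq_mul_inv] using this.const_mul a
    rcases eq_or_lt_of_le hb with hb0 | hbpos
    · -- b = 0
      have hu0 : Tendsto u atTop (𝓝 0) := by
        have : Tendsto (fun s : ℝ => b * Real.sqrt s) atTop (𝓝 0) := by
          simp [← hb0]
        simpa [hu, sub_eq_add_neg] using this.add hainv.neg
      have hv0 : Tendsto v atTop (𝓝 0) := by
        have : Tendsto (fun s : ℝ => -(b * Real.sqrt s)) atTop (𝓝 0) := by
          simp [← hb0]
        simpa [hv, sub_eq_add_neg] using this.add hainv.neg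
      have hPhiC : ContinuousAt Phi 0 := (hasDerivAt_Phi 0).continuousAt
      have h1 : Tendsto (fun s => Phi (u s)) atTop (𝓝 (1/2)) := by
        have := hPhiC.tendsto.comp hu0
        rwa [Phi_zero] at this
      have h2 : Tendsto (fun s => Real.exp (2 * a * b) * Phi (v s)) atTop
          (𝓝 (Real.exp (2 * a * b) * (1/2))) := by
        have hv' := hPhiC.tendsto.comp hv0
        rw [Phi_zero] at hv'
        exact hv'.const_mul _
      have hsum := h1.add h2
      have hval : (1:ℝ) = 1/2 + Real.exp (2 * a * b) * (1/2) := by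
        rw [← hb0]; norm_num
      rw [hval]
      exact hsum
    · -- b > 0
      have hsqT : Tendsto (fun s : ℝ => b * Real.sqrt s) atTop atTop :=
        sqrt_tendsto_atTop.const_mul_atTop hbpos
      have huT : Tendsto u atTop atTop := by
        have := hsqT.atTop_add (hainv.neg)
        refine this.congr fun s => ?_
        simp [hu, sub_eq_add_neg]
      have hvB : Tendsto v atTop atBot := by
        have h0 : Tendsto (fun s : ℝ => -(b * Real.sqrt s)) atTop atBot :=
          tendsto_neg_atTop_atBot.comp hsqT
        have := (hainv.neg).add_atBot h0
        refine this.congr fun s => ?_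
        simp [hv, sub_eq_add_neg]
        ring
      have h1 : Tendsto (fun s => Phi (u s)) atTop (𝓝 1) := Phi_tendsto_atTop.comp huT
      have h2 : Tendsto (fun s => Real.exp (2 * a * b) * Phi (v s)) atTop (𝓝 0) := by
        simpa using (Phi_tendsto_atBot.comp hvB).const_mul (Real.exp (2 * a * b))
      have := h1.add h2
      simpa using this
  have := integral_Ioi_of_hasDerivAt_of_nonneg hcont hderiv hpos htop
  rw [this]
  simp [hG]


theorem stmt_18 (a c : ℝ) (ha : 0 < a) :
    (∫ s in Set.Ioi (0:ℝ), h s a * Real.exp (-c * a - c ^ 2 * s / 2)) =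
        Real.exp (-c * a - |c| * a) ∧
      (0 ≤ c → (∫ s in Set.Ioi (0:ℝ), h s a * Real.exp (-c * a - c ^ 2 * s / 2)) =
        Real.exp (-2 * c * a)) := by
  have hmain : (∫ s in Set.Ioi (0:ℝ), h s a * Real.exp (-c * a - c ^ 2 * s / 2)) =
      Real.exp (-c * a - |c| * a) := by
    have hcongr : ∀ s ∈ Set.Ioi (0:ℝ),
        h s a * Real.exp (-c * a - c ^ 2 * s / 2) =
        Real.exp (-c * a - |c| * a) *
          (a / Real.sqrt (2 * Real.pi * s ^ 3) * Real.exp (-(a - |c| * s) ^ 2 / (2 * s))) := by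
      intro s hs
      rw [Set.mem_Ioi] at hs
      unfold h
      have hexp : -a ^ 2 / (2 * s) + (-c * a - c ^ 2 * s / 2) =
          (-c * a - |c| * a) + -(a - |c| * s) ^ 2 / (2 * s) := by
        rw [← sq_abs c]
        field_simp
        ring
      rw [mul_assoc, ← Real.exp_add, hexp, Real.exp_add]
      ring
    rw [setIntegral_congr_fun measurableSet_Ioi hcongr, integral_const_mul,
      key_integral a |c| ha (abs_nonneg c), mul_one]
  refine ⟨hmain, fun hc => ?_⟩
  rw [hmain, abs_of_nonneg hc]
  ring_nf
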